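/- arXiv:1010.1542 — 6 statements merged into one kernel-verified Lean document; each statement's English description precedes it below -/
import Mathlib

section
/- In the Lie algebra g spanned by ∂_t, ∂_y, F, X(f) and Z(g) (f, g ranging over smooth functions of t), the center is exactly the span of X(1), F and Z(1), i.e. the set of elements commuting with all of g consists of the constant-coefficient translations a∂_x + bF + c(∂_{ψ¹}+∂_{ψ²}). -/
open Real

/-- Smooth vector fields on ℝ⁵ with coordinates (t,x,y,ψ¹,ψ²), represented by
their coefficient functions. -/
abbrev VF := (Fin 5 → ℝ) → (Fin 5 → ℝ)

/-- The Lie bracket (commutator) of vector fields. -/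
noncomputable def lieBr (V W : VF) : VF :=
  fun x => fderiv ℝ W x (V x) - fderiv ℝ V x (W x)

/-- ∂_t -/
def Dt : VF := fun _ i => if i = 0 then 1 else 0

/-- ∂_y -/
def Dy : VF := fun _ i => if i = 2 then 1 else 0

/-- F = ∂_{ψ¹} - ∂_{ψ²} -/
def Fop : VF := fun _ i => if i = 3 then 1 else if i = 4 then -1 else 0

/-- X(f) = f(t)∂_x - f'(t) y (∂_{ψ¹} + ∂_{ψ²}) -/
noncomputable def Xf (f : ℝ → ℝ) : VF :=
  fun x i => if i = 1 then f (x 0) else if i = 3 ∨ i = 4 then -(deriv f (x 0)) * x 2 else 0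

/-- Z(g) = g(t)(∂_{ψ¹} + ∂_{ψ²}) -/
noncomputable def Zg (g : ℝ → ℝ) : VF :=
  fun x i => if i = 3 ∨ i = 4 then g (x 0) else 0

/-- The set of all X(f) with f smooth. -/
def XSet : Set VF := {V | ∃ f : ℝ → ℝ, ContDiff ℝ (⊤ : ℕ∞) f ∧ V = Xf f}

/-- The set of all Z(g) with g smooth. -/
def ZSet : Set VF := {V | ∃ g : ℝ → ℝ, ContDiff ℝ (⊤ : ℕ∞) g ∧ V = Zg g}

/-- The span of the brackets of elements of two subspaces of vector fields. -/
noncomputable def brSpan (A B : Submodule ℝ VF) : Submodule ℝ VF :=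
  Submodule.span ℝ {v | ∃ a ∈ A, ∃ b ∈ B, v = lieBr a b}

/-- The maximal Lie invariance algebra g. -/
noncomputable def gAlg : Submodule ℝ VF :=
  Submodule.span ℝ ({Dt, Dy, Fop} ∪ XSet ∪ ZSet)

-- auxiliary
noncomputable def P (i : Fin 5) : (Fin 5 → ℝ) →L[ℝ] ℝ := ContinuousLinearMap.proj i

open ContinuousLinearMap in
noncomputable def XfD (f : ℝ → ℝ) (x : Fin 5 → ℝ) : (Fin 5 → ℝ) →L[ℝ] (Fin 5 → ℝ) :=
  ContinuousLinearMap.pi (fun i =>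
    if i = 1 then deriv f (x 0) • P 0
    else if i = 3 ∨ i = 4 then
      -((deriv (deriv f) (x 0) * x 2) • P 0
        + deriv f (x 0) • P 2)
    else 0)

open ContinuousLinearMap in
noncomputable def ZgD (g : ℝ → ℝ) (x : Fin 5 → ℝ) : (Fin 5 → ℝ) →L[ℝ] (Fin 5 → ℝ) :=
  ContinuousLinearMap.pi (fun i =>
    if i = 3 ∨ i = 4 then deriv g (x 0) • P 0 else 0)

lemma smooth_deriv {f : ℝ → ℝ} (hf : ContDiff ℝ (⊤ : ℕ∞) f) : Differentiable ℝ (deriv f) :=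
  ((contDiff_infty_iff_deriv.mp (hf.of_le (by simp))).2).differentiable (by simp)

lemma Xf_hasFDerivAt {f : ℝ → ℝ} (hf : ContDiff ℝ (⊤ : ℕ∞) f) (x : Fin 5 → ℝ) :
    HasFDerivAt (Xf f) (XfD f x) x := by
  rw [XfD, hasFDerivAt_pi']
  intro i
  rw [ContinuousLinearMap.proj_pi]
  have hproj0 : HasFDerivAt (fun y : Fin 5 → ℝ => y 0) (P 0) x :=
    hasFDerivAt_apply (0 : Fin 5) x
  have hproj2 : HasFDerivAt (fun y : Fin 5 → ℝ => y 2) (P 2) x :=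
    hasFDerivAt_apply (2 : Fin 5) x
  have hf1 : HasFDerivAt (fun y : Fin 5 → ℝ => f (y 0))
      (deriv f (x 0) • P 0) x := by
    exact
      HasDerivAt.comp_hasFDerivAt x ((hf.differentiable (by simp) (x 0)).hasDerivAt) hproj0
  have hdf : HasFDerivAt (fun y : Fin 5 → ℝ => deriv f (y 0))
      (deriv (deriv f) (x 0) • P 0) x := by
    exact
      HasDerivAt.comp_hasFDerivAt x
        ((smooth_deriv hf (x 0)).hasDerivAt) hproj0
  have hmul : ∀ D : (Fin 5 → ℝ) →L[ℝ] ℝ,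
      D = -(deriv f (x 0) • P 2) + -((deriv (deriv f) (x 0) * x 2) • P 0) →
      HasFDerivAt (fun y : Fin 5 → ℝ => -(deriv f (y 0) * y 2)) D x := by
    intro D hD
    refine ((hdf.mul hproj2).neg).congr_fderiv ?_
    rw [hD]; ext u; simp [P, smul_smul]; ring
  fin_cases i <;> simp only [Xf] <;> norm_num
  · exact hasFDerivAt_const 0 x
  · exact hf1
  · exact hasFDerivAt_const 0 x
  · exact hmul _ rfl
  · exact hmul _ rfl

lemma Zg_hasFDerivAt {g : ℝ → ℝ} (hg : ContDiff ℝ (⊤ : ℕ∞) g) (x : Fin 5 → ℝ) :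
    HasFDerivAt (Zg g) (ZgD g x) x := by
  rw [ZgD, hasFDerivAt_pi']
  intro i
  rw [ContinuousLinearMap.proj_pi]
  have hg1 : HasFDerivAt (fun y : Fin 5 → ℝ => g (y 0))
      (deriv g (x 0) • P 0) x := by
    exact
      HasDerivAt.comp_hasFDerivAt x ((hg.differentiable (by simp) (x 0)).hasDerivAt)
        (hasFDerivAt_apply (0 : Fin 5) x)
  fin_cases i <;> simp only [Zg] <;> norm_num
  · exact hasFDerivAt_const 0 x
  · exact hasFDerivAt_const 0 x
  · exact hasFDerivAt_const 0 x
  · exact hg1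
  · exact hg1

lemma gAlg_deriv (W : VF) (hW : W ∈ gAlg) :
    Differentiable ℝ W ∧ ∀ (x u : Fin 5 → ℝ), u 0 = 0 → u 2 = 0 → fderiv ℝ W x u = 0 := by
  have hconst : ∀ c : Fin 5 → ℝ, Differentiable ℝ (fun _ : Fin 5 → ℝ => c) ∧
      ∀ (x u : Fin 5 → ℝ), u 0 = 0 → u 2 = 0 → fderiv ℝ (fun _ : Fin 5 → ℝ => c) x u = 0 :=
    fun c => ⟨differentiable_const c, fun x u _ _ => by simp⟩
  induction hW using Submodule.span_induction with
  | mem W hW =>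
    rcases hW with (hW | hW) | hW
    · rcases hW with rfl | rfl | rfl
      · exact hconst _
      · exact hconst _
      · exact hconst _
    · obtain ⟨f, hf, rfl⟩ := hW
      refine ⟨fun x => (Xf_hasFDerivAt hf x).differentiableAt, fun x u hu0 hu2 => ?_⟩
      rw [(Xf_hasFDerivAt hf x).fderiv]
      funext i
      fin_cases i <;> simp [XfD, P, hu0, hu2]
    · obtain ⟨g, hg, rfl⟩ := hW
      refine ⟨fun x => (Zg_hasFDerivAt hg x).differentiableAt, fun x u hu0 hu2 => ?_⟩
      rw [(Zg_hasFDerivAt hg x).fderiv]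
      funext i
      fin_cases i <;> simp [ZgD, P, hu0, hu2]
  | zero => exact hconst 0
  | add W W' hW hW' ihW ihW' =>
    refine ⟨ihW.1.add ihW'.1, fun x u hu0 hu2 => ?_⟩
    have : fderiv ℝ (fun y => W y + W' y) x = fderiv ℝ W x + fderiv ℝ W' x :=
      fderiv_add (ihW.1.differentiableAt) (ihW'.1.differentiableAt)
    have h2 := congrArg (fun L => L u) this
    try simp only at h2
    show fderiv ℝ (fun y => W y + W' y) x u = 0
    rw [h2, ContinuousLinearMap.add_apply, ihW.2 x u hu0 hu2, ihW'.2 x u hu0 hu2, add_zero]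
  | smul a W hW ihW =>
    refine ⟨ihW.1.const_smul a, fun x u hu0 hu2 => ?_⟩
    have : fderiv ℝ (fun y => a • W y) x = a • fderiv ℝ W x :=
      fderiv_const_smul (ihW.1.differentiableAt) a
    have h2 := congrArg (fun L => L u) this
    try simp only at h2
    show fderiv ℝ (fun y => a • W y) x u = 0
    rw [h2, ContinuousLinearMap.smul_apply, ihW.2 x u hu0 hu2, smul_zero]

noncomputable def E (i : Fin 5) : Fin 5 → ℝ := fun j => if j = i then 1 else 0

lemma Xf_one : Xf (fun _ => 1) = fun _ => E 1 := by
  funext x i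
  simp [Xf, E]

lemma Zg_one : Zg (fun _ => 1) = fun _ => E 3 + E 4 := by
  funext x i
  fin_cases i <;> simp [Zg, E]

lemma Fop_eq : Fop = fun _ => E 3 - E 4 := by
  funext x i
  fin_cases i <;> simp [Fop, E]

lemma Dt_eq : Dt = fun _ => E 0 := by
  funext x i; simp [Dt, E]

lemma Dy_eq : Dy = fun _ => E 2 := by
  funext x i; simp [Dy, E]

lemma mem_gAlg_Xf {f : ℝ → ℝ} (hf : ContDiff ℝ (⊤ : ℕ∞) f) : Xf f ∈ gAlg :=
  Submodule.subset_span (Or.inl (Or.inr ⟨f, hf, rfl⟩))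

lemma mem_gAlg_Zg {g : ℝ → ℝ} (hg : ContDiff ℝ (⊤ : ℕ∞) g) : Zg g ∈ gAlg :=
  Submodule.subset_span (Or.inr ⟨g, hg, rfl⟩)


/-- The center of g is exactly the span of X(1), F and Z(1). -/
theorem center_of_gAlg (V : VF) :
    (V ∈ gAlg ∧ ∀ W ∈ gAlg, lieBr V W = 0) ↔
      V ∈ Submodule.span ℝ ({Xf (fun _ => 1), Fop, Zg (fun _ => 1)} : Set VF) := by
  constructor
  · rintro ⟨h1, h2⟩
    have hVd : Differentiable ℝ V := (gAlg_deriv V h1).1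
    -- brackets with constant fields kill fderiv V
    have key : ∀ (c : Fin 5 → ℝ), (fun _ : Fin 5 → ℝ => c) ∈ gAlg →
        ∀ x, fderiv ℝ V x c = 0 := by
      intro c hc x
      have h := congrFun (h2 _ hc) x
      have hc0 : fderiv ℝ (fun _ : Fin 5 → ℝ => c) x = 0 := fderiv_const_apply c
      simp only [lieBr, hc0, ContinuousLinearMap.zero_apply, zero_sub, Pi.zero_apply] at h
      have := neg_eq_zero.mp h
      exact this
    have hmemE : ∀ x, ∀ i : Fin 5, fderiv ℝ V x (E i) = 0 := by
      intro x i
      have h0 : fderiv ℝ V x (E 0) = 0 :=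
        key (E 0) (Dt_eq ▸ Submodule.subset_span (Or.inl (Or.inl (by simp)))) x
      have h1 : fderiv ℝ V x (E 1) = 0 :=
        key (E 1) (Xf_one ▸ mem_gAlg_Xf contDiff_const) x
      have h2' : fderiv ℝ V x (E 2) = 0 :=
        key (E 2) (Dy_eq ▸ Submodule.subset_span (Or.inl (Or.inl (by simp)))) x
      have hsum : fderiv ℝ V x (E 3 + E 4) = 0 :=
        key (E 3 + E 4) (Zg_one ▸ mem_gAlg_Zg contDiff_const) x
      have hdiff : fderiv ℝ V x (E 3 - E 4) = 0 :=
        key (E 3 - E 4) (Fop_eq ▸ Submodule.subset_span (Or.inl (Or.inl (by simp)))) x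
      have h3 : fderiv ℝ V x (E 3) = 0 := by
        have := congrArg₂ (· + ·) hsum hdiff
        simp only [← map_add, add_zero] at this
        have h' : (E 3 + E 4) + (E 3 - E 4) = (2:ℝ) • E 3 := by ext j; simp [E]; split_ifs <;> ring
        rw [h'] at this
        simpa using this
      have h4 : fderiv ℝ V x (E 4) = 0 := by
        have := congrArg₂ (· - ·) hsum hdiff
        simp only [← map_sub, sub_zero] at this
        have h' : (E 3 + E 4) - (E 3 - E 4) = (2:ℝ) • E 4 := by ext j; simp [E]; split_ifs <;> ring
        rw [h'] at this
        simpa using this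
      fin_cases i <;> assumption
    have hfV : ∀ x, fderiv ℝ V x = 0 := by
      intro x
      ext u
      have hu : u = ∑ i : Fin 5, u i • E i := by
        funext j
        rw [Finset.sum_apply]
        simp [E, Finset.sum_ite_eq', mul_comm]
      rw [hu]
      rw [map_sum]
      simp only [map_smul, hmemE, smul_zero]
      simp
    have hVc : ∀ x y : Fin 5 → ℝ, V x = V y := is_const_of_fderiv_eq_zero hVd hfV
    set v := V 0 with hv
    -- bracket with X(t) kills components 0 and 2
    have hXt := congrFun (h2 (Xf (fun s => s)) (mem_gAlg_Xf contDiff_id)) 0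
    have hfd : fderiv ℝ (Xf (fun s => s)) 0 = XfD (fun s => s) 0 :=
      (Xf_hasFDerivAt contDiff_id 0).fderiv
    simp only [lieBr, hfV, ContinuousLinearMap.zero_apply, sub_zero, hfd, Pi.zero_apply] at hXt
    have hv0 : v 0 = 0 := by
      have := congrFun hXt 1
      simpa [XfD, P, v] using this
    have hv2 : v 2 = 0 := by
      have := congrFun hXt 3
      simp [XfD, P, v] at this
      simpa [deriv_id''] using this
    -- express V as a combination
    have hVrep : V = (v 1) • Xf (fun _ => 1) + ((v 3 - v 4)/2) • Fop
        + ((v 3 + v 4)/2) • Zg (fun _ => 1) := by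
      funext x i
      have hVx : V x = v := hVc x 0
      show V x i = _
      rw [hVx]
      fin_cases i <;>
        simp [Xf_one, Fop, Zg, E, hv0, hv2, Pi.add_apply, Pi.smul_apply] <;> ring
    rw [hVrep]
    refine Submodule.add_mem _ (Submodule.add_mem _ ?_ ?_) ?_ <;>
      refine Submodule.smul_mem _ _ (Submodule.subset_span ?_) <;> simp
  · intro hV
    have hsub : ({Xf (fun _ => 1), Fop, Zg (fun _ => 1)} : Set VF) ⊆ (gAlg : Set VF) := by
      rintro W (rfl | rfl | rfl)
      · exact mem_gAlg_Xf contDiff_const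
      · exact Submodule.subset_span (Or.inl (Or.inl (by simp)))
      · exact mem_gAlg_Zg contDiff_const
    refine ⟨Submodule.span_le.mpr hsub hV, ?_⟩
    -- V is a constant field with vanishing 0 and 2 components
    rw [Submodule.mem_span_insert] at hV
    obtain ⟨a, z, hz, rfl⟩ := hV
    rw [Submodule.mem_span_insert] at hz
    obtain ⟨b, z', hz', rfl⟩ := hz
    rw [Submodule.mem_span_singleton] at hz'
    obtain ⟨c, rfl⟩ := hz'
    set w : Fin 5 → ℝ := a • E 1 + b • (E 3 - E 4) + c • (E 3 + E 4) with hw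
    have hVc : (a • Xf (fun _ => 1) + (b • Fop + c • Zg (fun _ => 1))) = fun _ => w := by
      rw [Xf_one, Fop_eq, Zg_one]
      funext x i
      simp [hw]
      ring
    have hw0 : w 0 = 0 := by simp [hw, E]
    have hw2 : w 2 = 0 := by simp [hw, E]
    intro W hW
    funext x
    rw [hVc]
    show fderiv ℝ W x w - fderiv ℝ (fun _ : Fin 5 → ℝ => w) x ((W x)) = 0
    rw [fderiv_const_apply, (gAlg_deriv W hW).2 x w hw0 hw2]
    simp
end

section
/- Every transformation of the form (t,x,y,ψ⁻,ψ⁺) ↦ (ε₁t+T₀, ε₁x+f(t), ε₂y+Y₀, ε₃ψ⁻+Ψ₀⁻, ε₂ψ⁺ − 2ε₁ε₂f'(t)y + g(t)), with ε₁,ε₂,ε₃ ∈ {±1}, T₀,Y₀,Ψ₀⁻ ∈ ℝ and f,g smooth, maps any solution (ψ⁺,ψ⁻) of the two-layer system to another solution. -/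
open Real

/-- Partial derivative in t of a function of (t,x,y). -/
noncomputable def pt (u : ℝ → ℝ → ℝ → ℝ) : ℝ → ℝ → ℝ → ℝ :=
  fun t x y => deriv (fun s => u s x y) t

/-- Partial derivative in x of a function of (t,x,y). -/
noncomputable def px (u : ℝ → ℝ → ℝ → ℝ) : ℝ → ℝ → ℝ → ℝ :=
  fun t x y => deriv (fun s => u t s y) x

/-- Partial derivative in y of a function of (t,x,y). -/
noncomputable def py (u : ℝ → ℝ → ℝ → ℝ) : ℝ → ℝ → ℝ → ℝ :=
  fun t x y => deriv (fun s => u t x s) y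

/-- The Poisson bracket {a,b} = a_x b_y − a_y b_x. -/
noncomputable def pb (a b : ℝ → ℝ → ℝ → ℝ) : ℝ → ℝ → ℝ → ℝ :=
  fun t x y => px a t x y * py b t x y - py a t x y * px b t x y

/-- The 2D Laplacian in (x,y). -/
noncomputable def lap (u : ℝ → ℝ → ℝ → ℝ) : ℝ → ℝ → ℝ → ℝ :=
  fun t x y => px (px u) t x y + py (py u) t x y

/-- Barotropic potential vorticity Q⁺ = Δψ⁺ + 2βy. -/
noncomputable def Qp (β : ℝ) (ψp : ℝ → ℝ → ℝ → ℝ) : ℝ → ℝ → ℝ → ℝ :=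
  fun t x y => lap ψp t x y + 2 * β * y

/-- Baroclinic potential vorticity Q⁻ = Δψ⁻ − 2Fψ⁻. -/
noncomputable def Qm (F : ℝ) (ψm : ℝ → ℝ → ℝ → ℝ) : ℝ → ℝ → ℝ → ℝ :=
  fun t x y => lap ψm t x y - 2 * F * ψm t x y

/-- The two-layer quasi-geostrophic system in barotropic/baroclinic variables. -/
def IsSolutionBB (β F : ℝ) (ψp ψm : ℝ → ℝ → ℝ → ℝ) : Prop :=
  ∀ t x y : ℝ,
    pt (Qp β ψp) t x y
        + (1/2) * (pb ψp (Qp β ψp) t x y + pb ψm (Qm F ψm) t x y) = 0 ∧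
    pt (Qm F ψm) t x y
        + (1/2) * (pb ψp (Qm F ψm) t x y + pb ψm (Qp β ψp) t x y) = 0

/-! ### Auxiliary machinery -/

noncomputable def DD (w : ℝ×ℝ×ℝ) (U : ℝ×ℝ×ℝ → ℝ) : ℝ×ℝ×ℝ → ℝ := fun v => fderiv ℝ U v w

noncomputable def Phi (ε₁ ε₂ T₀ Y₀ : ℝ) (f : ℝ → ℝ) (t x y : ℝ) : ℝ×ℝ×ℝ :=
  (ε₁*(t-T₀), ε₁*(x - f (ε₁*(t-T₀))), ε₂*(y-Y₀))

lemma Phi22 (ε₁ ε₂ T₀ Y₀ : ℝ) (f : ℝ → ℝ) (t x y : ℝ) :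
    (Phi ε₁ ε₂ T₀ Y₀ f t x y).2.2 = ε₂*(y-Y₀) := rfl

lemma contDiff_DD {U : ℝ×ℝ×ℝ → ℝ} (hU : ContDiff ℝ (⊤ : ℕ∞) U) (w : ℝ×ℝ×ℝ) :
    ContDiff ℝ (⊤ : ℕ∞) (DD w U) :=
  (hU.fderiv_right (by simp)).clm_apply contDiff_const

lemma hasDerivAt_comp3 {V : ℝ×ℝ×ℝ → ℝ} (hV : Differentiable ℝ V)
    {a b c : ℝ → ℝ} {a' b' c' : ℝ} {s : ℝ}
    (ha : HasDerivAt a a' s) (hb : HasDerivAt b b' s) (hc : HasDerivAt c c' s) :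
    HasDerivAt (fun r => V (a r, b r, c r)) (fderiv ℝ V (a s, b s, c s) (a', b', c')) s :=
  (hV (a s, b s, c s)).hasFDerivAt.comp_hasDerivAt s (ha.prodMk (hb.prodMk hc))

lemma clm_apply3 (L : ℝ×ℝ×ℝ →L[ℝ] ℝ) (a b c : ℝ) :
    L (a, b, c) = a * L (1,0,0) + b * L (0,1,0) + c * L (0,0,1) := by
  have h : ((a, b, c) : ℝ×ℝ×ℝ)
      = a • ((1:ℝ),(0:ℝ),(0:ℝ)) + b • ((0:ℝ),(1:ℝ),(0:ℝ)) + c • ((0:ℝ),(0:ℝ),(1:ℝ)) := by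
    simp [Prod.ext_iff]
  rw [h, map_add, map_add, map_smul, map_smul, map_smul]
  simp [smul_eq_mul]

lemma pt_eq_fd {u : ℝ→ℝ→ℝ→ℝ} {U : ℝ×ℝ×ℝ → ℝ} (hU : Differentiable ℝ U)
    (h : ∀ t x y, u t x y = U (t, x, y)) (t x y : ℝ) :
    pt u t x y = fderiv ℝ U (t, x, y) (1, 0, 0) := by
  have e : (fun s => u s x y) = fun s => U (s, x, y) := funext fun s => h s x y
  show deriv (fun s => u s x y) t = _
  rw [e]
  exact (hasDerivAt_comp3 hU (hasDerivAt_id t) (hasDerivAt_const t x) (hasDerivAt_const t y)).deriv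

lemma px_eq_fd {u : ℝ→ℝ→ℝ→ℝ} {U : ℝ×ℝ×ℝ → ℝ} (hU : Differentiable ℝ U)
    (h : ∀ t x y, u t x y = U (t, x, y)) (t x y : ℝ) :
    px u t x y = fderiv ℝ U (t, x, y) (0, 1, 0) := by
  have e : (fun s => u t s y) = fun s => U (t, s, y) := funext fun s => h t s y
  show deriv (fun s => u t s y) x = _
  rw [e]
  exact (hasDerivAt_comp3 hU (hasDerivAt_const x t) (hasDerivAt_id x) (hasDerivAt_const x y)).deriv

lemma py_eq_fd {u : ℝ→ℝ→ℝ→ℝ} {U : ℝ×ℝ×ℝ → ℝ} (hU : Differentiable ℝ U)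
    (h : ∀ t x y, u t x y = U (t, x, y)) (t x y : ℝ) :
    py u t x y = fderiv ℝ U (t, x, y) (0, 0, 1) := by
  have e : (fun s => u t x s) = fun s => U (t, x, s) := funext fun s => h t x s
  show deriv (fun s => u t x s) y = _
  rw [e]
  exact (hasDerivAt_comp3 hU (hasDerivAt_const y t) (hasDerivAt_const y x) (hasDerivAt_id y)).deriv

lemma px_comp {V : ℝ×ℝ×ℝ → ℝ} (hV : Differentiable ℝ V)
    {ε₁ ε₂ T₀ Y₀ : ℝ} {f : ℝ → ℝ} {u : ℝ→ℝ→ℝ→ℝ} {r d : ℝ} {t x y : ℝ}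
    (h : ∀ x', u t x' y = r * V (Phi ε₁ ε₂ T₀ Y₀ f t x' y) + d) :
    px u t x y = r * ε₁ * fderiv ℝ V (Phi ε₁ ε₂ T₀ Y₀ f t x y) (0,1,0) := by
  have e : (fun s => u t s y)
      = fun s => r * V (ε₁*(t-T₀), ε₁*(s - f (ε₁*(t-T₀))), ε₂*(y-Y₀)) + d := by
    funext s; rw [h s]; rfl
  have hb : HasDerivAt (fun s : ℝ => ε₁*(s - f (ε₁*(t-T₀)))) (ε₁ * 1) x :=
    ((hasDerivAt_id x).sub_const _).const_mul ε₁
  have hmain :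
      HasDerivAt (fun s => r * V (ε₁*(t-T₀), ε₁*(s - f (ε₁*(t-T₀))), ε₂*(y-Y₀)) + d)
        (r * fderiv ℝ V (ε₁*(t-T₀), ε₁*(x - f (ε₁*(t-T₀))), ε₂*(y-Y₀)) (0, ε₁*1, 0)) x :=
    ((hasDerivAt_comp3 hV (hasDerivAt_const x _) hb (hasDerivAt_const x _)).const_mul r).add_const d
  show deriv (fun s => u t s y) x = _
  rw [e, hmain.deriv, clm_apply3]
  show _ = r * ε₁ * fderiv ℝ V (ε₁*(t-T₀), ε₁*(x - f (ε₁*(t-T₀))), ε₂*(y-Y₀)) (0,1,0)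
  ring

lemma py_comp {V : ℝ×ℝ×ℝ → ℝ} (hV : Differentiable ℝ V)
    {ε₁ ε₂ T₀ Y₀ : ℝ} {f : ℝ → ℝ} {u : ℝ→ℝ→ℝ→ℝ} {r d : ℝ} {t x y : ℝ}
    (h : ∀ y', u t x y' = r * V (Phi ε₁ ε₂ T₀ Y₀ f t x y') + d) :
    py u t x y = r * ε₂ * fderiv ℝ V (Phi ε₁ ε₂ T₀ Y₀ f t x y) (0,0,1) := by
  have e : (fun s => u t x s)
      = fun s => r * V (ε₁*(t-T₀), ε₁*(x - f (ε₁*(t-T₀))), ε₂*(s-Y₀)) + d := by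
    funext s; rw [h s]; rfl
  have hc : HasDerivAt (fun s : ℝ => ε₂*(s - Y₀)) (ε₂ * 1) y :=
    ((hasDerivAt_id y).sub_const _).const_mul ε₂
  have hmain :
      HasDerivAt (fun s => r * V (ε₁*(t-T₀), ε₁*(x - f (ε₁*(t-T₀))), ε₂*(s-Y₀)) + d)
        (r * fderiv ℝ V (ε₁*(t-T₀), ε₁*(x - f (ε₁*(t-T₀))), ε₂*(y-Y₀)) (0, 0, ε₂*1)) y :=
    ((hasDerivAt_comp3 hV (hasDerivAt_const y _) (hasDerivAt_const y _) hc).const_mul r).add_const d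
  show deriv (fun s => u t x s) y = _
  rw [e, hmain.deriv, clm_apply3]
  show _ = r * ε₂ * fderiv ℝ V (ε₁*(t-T₀), ε₁*(x - f (ε₁*(t-T₀))), ε₂*(y-Y₀)) (0,0,1)
  ring

lemma py_comp_affine {V : ℝ×ℝ×ℝ → ℝ} (hV : Differentiable ℝ V)
    {ε₁ ε₂ T₀ Y₀ : ℝ} {f : ℝ → ℝ} {u : ℝ→ℝ→ℝ→ℝ} {r A B : ℝ} {t x y : ℝ}
    (h : ∀ y', u t x y' = r * V (Phi ε₁ ε₂ T₀ Y₀ f t x y') + (A * (ε₂*(y'-Y₀)) + B)) :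
    py u t x y = r * ε₂ * fderiv ℝ V (Phi ε₁ ε₂ T₀ Y₀ f t x y) (0,0,1) + A * ε₂ := by
  have e : (fun s => u t x s)
      = fun s => r * V (ε₁*(t-T₀), ε₁*(x - f (ε₁*(t-T₀))), ε₂*(s-Y₀)) + (A * (ε₂*(s-Y₀)) + B) := by
    funext s; rw [h s]; rfl
  have hc : HasDerivAt (fun s : ℝ => ε₂*(s - Y₀)) (ε₂ * 1) y :=
    ((hasDerivAt_id y).sub_const _).const_mul ε₂
  have haff : HasDerivAt (fun s : ℝ => A * (ε₂*(s-Y₀)) + B) (A * (ε₂ * 1)) y :=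
    (hc.const_mul A).add_const B
  have hmain :
      HasDerivAt (fun s => r * V (ε₁*(t-T₀), ε₁*(x - f (ε₁*(t-T₀))), ε₂*(s-Y₀)) + (A * (ε₂*(s-Y₀)) + B))
        (r * fderiv ℝ V (ε₁*(t-T₀), ε₁*(x - f (ε₁*(t-T₀))), ε₂*(y-Y₀)) (0, 0, ε₂*1) + A * (ε₂ * 1)) y :=
    ((hasDerivAt_comp3 hV (hasDerivAt_const y _) (hasDerivAt_const y _) hc).const_mul r).add haff
  show deriv (fun s => u t x s) y = _
  rw [e, hmain.deriv, clm_apply3]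
  show _ = r * ε₂ * fderiv ℝ V (ε₁*(t-T₀), ε₁*(x - f (ε₁*(t-T₀))), ε₂*(y-Y₀)) (0,0,1) + A * ε₂
  ring

lemma pt_comp {V : ℝ×ℝ×ℝ → ℝ} (hV : Differentiable ℝ V)
    {ε₁ ε₂ T₀ Y₀ : ℝ} {f : ℝ → ℝ} (hf : Differentiable ℝ f)
    {u : ℝ→ℝ→ℝ→ℝ} {r d : ℝ} {t x y : ℝ}
    (h : ∀ t', u t' x y = r * V (Phi ε₁ ε₂ T₀ Y₀ f t' x y) + d) :
    pt u t x y = r * ε₁ * fderiv ℝ V (Phi ε₁ ε₂ T₀ Y₀ f t x y) (1,0,0)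
      - r * ε₁ * ε₁ * deriv f (ε₁*(t-T₀)) * fderiv ℝ V (Phi ε₁ ε₂ T₀ Y₀ f t x y) (0,1,0) := by
  have e : (fun s => u s x y)
      = fun s => r * V (ε₁*(s-T₀), ε₁*(x - f (ε₁*(s-T₀))), ε₂*(y-Y₀)) + d := by
    funext s; rw [h s]; rfl
  have ha : HasDerivAt (fun s : ℝ => ε₁*(s - T₀)) (ε₁ * 1) t :=
    ((hasDerivAt_id t).sub_const _).const_mul ε₁
  have hfc : HasDerivAt (fun s : ℝ => f (ε₁*(s - T₀))) (deriv f (ε₁*(t-T₀)) * (ε₁ * 1)) t :=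
    (hf (ε₁*(t-T₀))).hasDerivAt.comp t ha
  have hb : HasDerivAt (fun s : ℝ => ε₁*(x - f (ε₁*(s-T₀))))
      (ε₁ * (0 - deriv f (ε₁*(t-T₀)) * (ε₁ * 1))) t :=
    ((hasDerivAt_const t x).sub hfc).const_mul ε₁
  have hmain :
      HasDerivAt (fun s => r * V (ε₁*(s-T₀), ε₁*(x - f (ε₁*(s-T₀))), ε₂*(y-Y₀)) + d)
        (r * fderiv ℝ V (ε₁*(t-T₀), ε₁*(x - f (ε₁*(t-T₀))), ε₂*(y-Y₀))
          (ε₁*1, ε₁ * (0 - deriv f (ε₁*(t-T₀)) * (ε₁ * 1)), 0)) t :=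
    ((hasDerivAt_comp3 hV ha hb (hasDerivAt_const t _)).const_mul r).add_const d
  show deriv (fun s => u s x y) t = _
  rw [e, hmain.deriv, clm_apply3]
  show _ = r * ε₁ * fderiv ℝ V (ε₁*(t-T₀), ε₁*(x - f (ε₁*(t-T₀))), ε₂*(y-Y₀)) (1,0,0)
      - r * ε₁ * ε₁ * deriv f (ε₁*(t-T₀))
        * fderiv ℝ V (ε₁*(t-T₀), ε₁*(x - f (ε₁*(t-T₀))), ε₂*(y-Y₀)) (0,1,0)
  ring

noncomputable def QQ (β : ℝ) (P : ℝ×ℝ×ℝ→ℝ) : ℝ×ℝ×ℝ→ℝ :=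
  fun v => fderiv ℝ (DD (0,1,0) P) v (0,1,0) + fderiv ℝ (DD (0,0,1) P) v (0,0,1) + 2*β*v.2.2

noncomputable def QQm (F : ℝ) (M : ℝ×ℝ×ℝ→ℝ) : ℝ×ℝ×ℝ→ℝ :=
  fun v => fderiv ℝ (DD (0,1,0) M) v (0,1,0) + fderiv ℝ (DD (0,0,1) M) v (0,0,1) - 2*F*M v

lemma QQ_diff {β : ℝ} {P : ℝ×ℝ×ℝ→ℝ} (hP : ContDiff ℝ (⊤ : ℕ∞) P) : Differentiable ℝ (QQ β P) := by
  have h1 := (contDiff_DD (contDiff_DD hP (0,1,0)) (0,1,0)).differentiable (by simp)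
  have h2 := (contDiff_DD (contDiff_DD hP (0,0,1)) (0,0,1)).differentiable (by simp)
  have h3 : Differentiable ℝ (fun v : ℝ×ℝ×ℝ => 2*β*v.2.2) := by fun_prop
  exact (h1.add h2).add h3

lemma QQm_diff {F : ℝ} {M : ℝ×ℝ×ℝ→ℝ} (hM : ContDiff ℝ (⊤ : ℕ∞) M) : Differentiable ℝ (QQm F M) := by
  have h1 := (contDiff_DD (contDiff_DD hM (0,1,0)) (0,1,0)).differentiable (by simp)
  have h2 := (contDiff_DD (contDiff_DD hM (0,0,1)) (0,0,1)).differentiable (by simp)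
  have h3 : Differentiable ℝ (fun v : ℝ×ℝ×ℝ => 2*F*M v) := by
    exact (hM.differentiable (by simp)).const_mul _
  exact (h1.add h2).sub h3

/-- Every transformation of the stated form maps solutions of the two-layer system
in barotropic/baroclinic variables to solutions. -/
theorem symmetry_maps_solutions_to_solutions
    (β F : ℝ) (hβ : β ≠ 0) (hF : F ≠ 0)
    (ε₁ ε₂ ε₃ : ℝ) (hε₁ : ε₁ = 1 ∨ ε₁ = -1) (hε₂ : ε₂ = 1 ∨ ε₂ = -1)
    (hε₃ : ε₃ = 1 ∨ ε₃ = -1)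
    (T₀ Y₀ Ψ₀ : ℝ) (f g : ℝ → ℝ) (hf : ContDiff ℝ (⊤ : ℕ∞) f) (hg : ContDiff ℝ (⊤ : ℕ∞) g)
    (ψp ψm : ℝ → ℝ → ℝ → ℝ)
    (hψp : ContDiff ℝ (⊤ : ℕ∞) (fun v : ℝ × ℝ × ℝ => ψp v.1 v.2.1 v.2.2))
    (hψm : ContDiff ℝ (⊤ : ℕ∞) (fun v : ℝ × ℝ × ℝ => ψm v.1 v.2.1 v.2.2))
    (hsol : IsSolutionBB β F ψp ψm) :
    IsSolutionBB β F
      (fun t' x' y' =>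
        ε₂ * ψp (ε₁ * (t' - T₀)) (ε₁ * (x' - f (ε₁ * (t' - T₀)))) (ε₂ * (y' - Y₀))
          - 2 * ε₁ * ε₂ * deriv f (ε₁ * (t' - T₀)) * (ε₂ * (y' - Y₀))
          + g (ε₁ * (t' - T₀)))
      (fun t' x' y' =>
        ε₃ * ψm (ε₁ * (t' - T₀)) (ε₁ * (x' - f (ε₁ * (t' - T₀)))) (ε₂ * (y' - Y₀))
          + Ψ₀) := by
  have hsq1 : ε₁ * ε₁ = 1 := by rcases hε₁ with h|h <;> rw [h] <;> norm_num
  have hsq2 : ε₂ * ε₂ = 1 := by rcases hε₂ with h|h <;> rw [h] <;> norm_num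
  have hsq3 : ε₃ * ε₃ = 1 := by rcases hε₃ with h|h <;> rw [h] <;> norm_num
  set P : ℝ×ℝ×ℝ → ℝ := (fun v : ℝ × ℝ × ℝ => ψp v.1 v.2.1 v.2.2) with hPdef
  set M : ℝ×ℝ×ℝ → ℝ := (fun v : ℝ × ℝ × ℝ => ψm v.1 v.2.1 v.2.2) with hMdef
  set φp : ℝ → ℝ → ℝ → ℝ := (fun t' x' y' =>
        ε₂ * ψp (ε₁ * (t' - T₀)) (ε₁ * (x' - f (ε₁ * (t' - T₀)))) (ε₂ * (y' - Y₀))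
          - 2 * ε₁ * ε₂ * deriv f (ε₁ * (t' - T₀)) * (ε₂ * (y' - Y₀))
          + g (ε₁ * (t' - T₀))) with hφpdef
  set φm : ℝ → ℝ → ℝ → ℝ := (fun t' x' y' =>
        ε₃ * ψm (ε₁ * (t' - T₀)) (ε₁ * (x' - f (ε₁ * (t' - T₀)))) (ε₂ * (y' - Y₀))
          + Ψ₀) with hφmdef
  have hPd : Differentiable ℝ P := hψp.differentiable (by simp)
  have hMd : Differentiable ℝ M := hψm.differentiable (by simp)
  have hfd : Differentiable ℝ f := hf.differentiable (by simp)
  have hPx : ContDiff ℝ (⊤ : ℕ∞) (DD (0,1,0) P) := contDiff_DD hψp _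
  have hPy : ContDiff ℝ (⊤ : ℕ∞) (DD (0,0,1) P) := contDiff_DD hψp _
  have hMx : ContDiff ℝ (⊤ : ℕ∞) (DD (0,1,0) M) := contDiff_DD hψm _
  have hMy : ContDiff ℝ (⊤ : ℕ∞) (DD (0,0,1) M) := contDiff_DD hψm _
  have hQQd : Differentiable ℝ (QQ β P) := QQ_diff hψp
  have hQQmd : Differentiable ℝ (QQm F M) := QQm_diff hψm
  -- original side
  have opx : ∀ t x y, px ψp t x y = DD (0,1,0) P (t,x,y) :=
    fun t x y => px_eq_fd hPd (fun _ _ _ => rfl) t x y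
  have opy : ∀ t x y, py ψp t x y = DD (0,0,1) P (t,x,y) :=
    fun t x y => py_eq_fd hPd (fun _ _ _ => rfl) t x y
  have omx : ∀ t x y, px ψm t x y = DD (0,1,0) M (t,x,y) :=
    fun t x y => px_eq_fd hMd (fun _ _ _ => rfl) t x y
  have omy : ∀ t x y, py ψm t x y = DD (0,0,1) M (t,x,y) :=
    fun t x y => py_eq_fd hMd (fun _ _ _ => rfl) t x y
  have opxx : ∀ t x y, px (px ψp) t x y = fderiv ℝ (DD (0,1,0) P) (t,x,y) (0,1,0) :=
    fun t x y => px_eq_fd (hPx.differentiable (by simp)) opx t x y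
  have opyy : ∀ t x y, py (py ψp) t x y = fderiv ℝ (DD (0,0,1) P) (t,x,y) (0,0,1) :=
    fun t x y => py_eq_fd (hPy.differentiable (by simp)) opy t x y
  have omxx : ∀ t x y, px (px ψm) t x y = fderiv ℝ (DD (0,1,0) M) (t,x,y) (0,1,0) :=
    fun t x y => px_eq_fd (hMx.differentiable (by simp)) omx t x y
  have omyy : ∀ t x y, py (py ψm) t x y = fderiv ℝ (DD (0,0,1) M) (t,x,y) (0,0,1) :=
    fun t x y => py_eq_fd (hMy.differentiable (by simp)) omy t x y
  have oQp : ∀ t x y, Qp β ψp t x y = QQ β P (t,x,y) := by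
    intro t x y
    show px (px ψp) t x y + py (py ψp) t x y + 2*β*y = _
    rw [opxx, opyy]; rfl
  have oQm : ∀ t x y, Qm F ψm t x y = QQm F M (t,x,y) := by
    intro t x y
    show px (px ψm) t x y + py (py ψm) t x y - 2*F*ψm t x y = _
    rw [omxx, omyy]; rfl
  have oQpt : ∀ t x y, pt (Qp β ψp) t x y = fderiv ℝ (QQ β P) (t,x,y) (1,0,0) :=
    fun t x y => pt_eq_fd hQQd oQp t x y
  have oQpx : ∀ t x y, px (Qp β ψp) t x y = fderiv ℝ (QQ β P) (t,x,y) (0,1,0) :=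
    fun t x y => px_eq_fd hQQd oQp t x y
  have oQpy : ∀ t x y, py (Qp β ψp) t x y = fderiv ℝ (QQ β P) (t,x,y) (0,0,1) :=
    fun t x y => py_eq_fd hQQd oQp t x y
  have oQmt : ∀ t x y, pt (Qm F ψm) t x y = fderiv ℝ (QQm F M) (t,x,y) (1,0,0) :=
    fun t x y => pt_eq_fd hQQmd oQm t x y
  have oQmx : ∀ t x y, px (Qm F ψm) t x y = fderiv ℝ (QQm F M) (t,x,y) (0,1,0) :=
    fun t x y => px_eq_fd hQQmd oQm t x y
  have oQmy : ∀ t x y, py (Qm F ψm) t x y = fderiv ℝ (QQm F M) (t,x,y) (0,0,1) :=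
    fun t x y => py_eq_fd hQQmd oQm t x y
  -- transformed side: first derivatives
  have hφpeq : ∀ t x y, φp t x y = ε₂ * P (Phi ε₁ ε₂ T₀ Y₀ f t x y)
      + (-(2*ε₁*ε₂*deriv f (ε₁*(t-T₀))) * (ε₂*(y-Y₀)) + g (ε₁*(t-T₀))) := by
    intro t x y
    simp only [hφpdef, hPdef, Phi]
    ring
  have hφmeq : ∀ t x y, φm t x y = ε₃ * M (Phi ε₁ ε₂ T₀ Y₀ f t x y) + Ψ₀ := by
    intro t x y
    simp only [hφmdef, hMdef, Phi]
  have hφpx : ∀ t x y, px φp t x y = (ε₂*ε₁) * DD (0,1,0) P (Phi ε₁ ε₂ T₀ Y₀ f t x y) + 0 := by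
    intro t x y
    rw [px_comp hPd (fun x' => hφpeq t x' y)]
    simp only [DD]; try ring
  have hφpy : ∀ t x y, py φp t x y = (ε₂*ε₂) * DD (0,0,1) P (Phi ε₁ ε₂ T₀ Y₀ f t x y)
      + (-(2*ε₁*ε₂*deriv f (ε₁*(t-T₀))) * ε₂) := by
    intro t x y
    rw [py_comp_affine hPd (fun y' => hφpeq t x y')]
    simp only [DD]; try ring
  have hφmx : ∀ t x y, px φm t x y = (ε₃*ε₁) * DD (0,1,0) M (Phi ε₁ ε₂ T₀ Y₀ f t x y) + 0 := by
    intro t x y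
    rw [px_comp hMd (fun x' => hφmeq t x' y)]
    simp only [DD]; try ring
  have hφmy : ∀ t x y, py φm t x y = (ε₃*ε₂) * DD (0,0,1) M (Phi ε₁ ε₂ T₀ Y₀ f t x y) + 0 := by
    intro t x y
    rw [py_comp hMd (fun y' => hφmeq t x y')]
    simp only [DD]; try ring
  -- transformed side: second derivatives
  have hφpxx : ∀ t x y, px (px φp) t x y
      = (ε₂*ε₁) * ε₁ * fderiv ℝ (DD (0,1,0) P) (Phi ε₁ ε₂ T₀ Y₀ f t x y) (0,1,0) :=
    fun t x y => px_comp (hPx.differentiable (by simp)) (fun x' => hφpx t x' y)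
  have hφpyy : ∀ t x y, py (py φp) t x y
      = (ε₂*ε₂) * ε₂ * fderiv ℝ (DD (0,0,1) P) (Phi ε₁ ε₂ T₀ Y₀ f t x y) (0,0,1) :=
    fun t x y => py_comp (hPy.differentiable (by simp)) (fun y' => hφpy t x y')
  have hφmxx : ∀ t x y, px (px φm) t x y
      = (ε₃*ε₁) * ε₁ * fderiv ℝ (DD (0,1,0) M) (Phi ε₁ ε₂ T₀ Y₀ f t x y) (0,1,0) :=
    fun t x y => px_comp (hMx.differentiable (by simp)) (fun x' => hφmx t x' y)
  have hφmyy : ∀ t x y, py (py φm) t x y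
      = (ε₃*ε₂) * ε₂ * fderiv ℝ (DD (0,0,1) M) (Phi ε₁ ε₂ T₀ Y₀ f t x y) (0,0,1) :=
    fun t x y => py_comp (hMy.differentiable (by simp)) (fun y' => hφmy t x y')
  -- potential vorticities of the transformed fields
  have hQp' : ∀ t x y, Qp β φp t x y = ε₂ * QQ β P (Phi ε₁ ε₂ T₀ Y₀ f t x y) + 2*β*Y₀ := by
    intro t x y
    show px (px φp) t x y + py (py φp) t x y + 2*β*y = _
    rw [hφpxx, hφpyy]
    simp only [QQ, Phi22]
    linear_combination (ε₂ * fderiv ℝ (DD (0,1,0) P) (Phi ε₁ ε₂ T₀ Y₀ f t x y) (0,1,0)) * hsq1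
      + (ε₂ * fderiv ℝ (DD (0,0,1) P) (Phi ε₁ ε₂ T₀ Y₀ f t x y) (0,0,1) - 2*β*(y-Y₀)) * hsq2
  have hQm' : ∀ t x y, Qm F φm t x y = ε₃ * QQm F M (Phi ε₁ ε₂ T₀ Y₀ f t x y) + -(2*F*Ψ₀) := by
    intro t x y
    show px (px φm) t x y + py (py φm) t x y - 2*F*φm t x y = _
    rw [hφmxx, hφmyy, hφmeq]
    simp only [QQm]
    linear_combination (ε₃ * fderiv ℝ (DD (0,1,0) M) (Phi ε₁ ε₂ T₀ Y₀ f t x y) (0,1,0)) * hsq1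
      + (ε₃ * fderiv ℝ (DD (0,0,1) M) (Phi ε₁ ε₂ T₀ Y₀ f t x y) (0,0,1)) * hsq2
  -- derivatives of the transformed potential vorticities
  have hQpt : ∀ t x y, pt (Qp β φp) t x y
      = ε₂ * ε₁ * fderiv ℝ (QQ β P) (Phi ε₁ ε₂ T₀ Y₀ f t x y) (1,0,0)
      - ε₂ * ε₁ * ε₁ * deriv f (ε₁*(t-T₀)) * fderiv ℝ (QQ β P) (Phi ε₁ ε₂ T₀ Y₀ f t x y) (0,1,0) :=
    fun t x y => pt_comp hQQd hfd (fun t' => hQp' t' x y)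
  have hQpx : ∀ t x y, px (Qp β φp) t x y
      = ε₂ * ε₁ * fderiv ℝ (QQ β P) (Phi ε₁ ε₂ T₀ Y₀ f t x y) (0,1,0) :=
    fun t x y => px_comp hQQd (fun x' => hQp' t x' y)
  have hQpy : ∀ t x y, py (Qp β φp) t x y
      = ε₂ * ε₂ * fderiv ℝ (QQ β P) (Phi ε₁ ε₂ T₀ Y₀ f t x y) (0,0,1) :=
    fun t x y => py_comp hQQd (fun y' => hQp' t x y')
  have hQmt : ∀ t x y, pt (Qm F φm) t x y
      = ε₃ * ε₁ * fderiv ℝ (QQm F M) (Phi ε₁ ε₂ T₀ Y₀ f t x y) (1,0,0)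
      - ε₃ * ε₁ * ε₁ * deriv f (ε₁*(t-T₀)) * fderiv ℝ (QQm F M) (Phi ε₁ ε₂ T₀ Y₀ f t x y) (0,1,0) :=
    fun t x y => pt_comp hQQmd hfd (fun t' => hQm' t' x y)
  have hQmx : ∀ t x y, px (Qm F φm) t x y
      = ε₃ * ε₁ * fderiv ℝ (QQm F M) (Phi ε₁ ε₂ T₀ Y₀ f t x y) (0,1,0) :=
    fun t x y => px_comp hQQmd (fun x' => hQm' t x' y)
  have hQmy : ∀ t x y, py (Qm F φm) t x y
      = ε₃ * ε₂ * fderiv ℝ (QQm F M) (Phi ε₁ ε₂ T₀ Y₀ f t x y) (0,0,1) :=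
    fun t x y => py_comp hQQmd (fun y' => hQm' t x y')
  -- conclude
  intro t x y
  have hvPhi : ((ε₁*(t-T₀), ε₁*(x - f (ε₁*(t-T₀))), ε₂*(y-Y₀)) : ℝ×ℝ×ℝ)
      = Phi ε₁ ε₂ T₀ Y₀ f t x y := rfl
  have E1 := (hsol (ε₁*(t-T₀)) (ε₁*(x - f (ε₁*(t-T₀)))) (ε₂*(y-Y₀))).1
  have E2 := (hsol (ε₁*(t-T₀)) (ε₁*(x - f (ε₁*(t-T₀)))) (ε₂*(y-Y₀))).2
  simp only [pb, oQpt, oQpx, oQpy, oQmt, oQmx, oQmy, opx, opy, omx, omy] at E1 E2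
  rw [hvPhi] at E1 E2
  constructor
  · show pt (Qp β φp) t x y
        + (1/2) * (pb φp (Qp β φp) t x y + pb φm (Qm F φm) t x y) = 0
    simp only [pb]
    rw [hQpt, hQpx, hQpy, hQmx, hQmy, hφpx, hφpy, hφmx, hφmy]
    linear_combination (ε₁*ε₂) * E1
      + (ε₁*ε₁*ε₂*deriv f (ε₁*(t-T₀)) * fderiv ℝ (QQ β P) (Phi ε₁ ε₂ T₀ Y₀ f t x y) (0,1,0)
         + (1/2)*ε₁*ε₂*(DD (0,1,0) P (Phi ε₁ ε₂ T₀ Y₀ f t x y)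
              * fderiv ℝ (QQ β P) (Phi ε₁ ε₂ T₀ Y₀ f t x y) (0,0,1)
            - DD (0,0,1) P (Phi ε₁ ε₂ T₀ Y₀ f t x y)
              * fderiv ℝ (QQ β P) (Phi ε₁ ε₂ T₀ Y₀ f t x y) (0,1,0))) * hsq2
      + ((1/2)*ε₁*ε₂*(DD (0,1,0) M (Phi ε₁ ε₂ T₀ Y₀ f t x y)
              * fderiv ℝ (QQm F M) (Phi ε₁ ε₂ T₀ Y₀ f t x y) (0,0,1)
            - DD (0,0,1) M (Phi ε₁ ε₂ T₀ Y₀ f t x y)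
              * fderiv ℝ (QQm F M) (Phi ε₁ ε₂ T₀ Y₀ f t x y) (0,1,0))) * hsq3
  · show pt (Qm F φm) t x y
        + (1/2) * (pb φp (Qm F φm) t x y + pb φm (Qp β φp) t x y) = 0
    simp only [pb]
    rw [hQmt, hQpx, hQpy, hQmx, hQmy, hφpx, hφpy, hφmx, hφmy]
    linear_combination (ε₁*ε₃) * E2
      + (ε₁*ε₁*ε₃*deriv f (ε₁*(t-T₀)) * fderiv ℝ (QQm F M) (Phi ε₁ ε₂ T₀ Y₀ f t x y) (0,1,0)
         + (1/2)*ε₁*ε₃*(DD (0,1,0) P (Phi ε₁ ε₂ T₀ Y₀ f t x y)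
              * fderiv ℝ (QQm F M) (Phi ε₁ ε₂ T₀ Y₀ f t x y) (0,0,1)
            - DD (0,0,1) P (Phi ε₁ ε₂ T₀ Y₀ f t x y)
              * fderiv ℝ (QQm F M) (Phi ε₁ ε₂ T₀ Y₀ f t x y) (0,1,0)
            + DD (0,1,0) M (Phi ε₁ ε₂ T₀ Y₀ f t x y)
              * fderiv ℝ (QQ β P) (Phi ε₁ ε₂ T₀ Y₀ f t x y) (0,0,1)
            - DD (0,0,1) M (Phi ε₁ ε₂ T₀ Y₀ f t x y)
              * fderiv ℝ (QQ β P) (Phi ε₁ ε₂ T₀ Y₀ f t x y) (0,1,0))) * hsq2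
end

section
/- For constants λ₁, β, F, c₂ with 2F − λ₁²H(q) ≠ 0 for all q, the function v̂(p,q) = (c₂/H(q)) exp(λ₁p + ∫ (2H'(q)F + βλ₁H(q))/((2F − λ₁²H(q))H(q)) dq) satisfies the PDE (H v̂_{pp})_q − 2F v̂_q + β v̂_p = 0. -/
open Real

/-- Partial derivative in the first variable p of a function of (p,q). -/
noncomputable def dp (u : ℝ → ℝ → ℝ) : ℝ → ℝ → ℝ :=
  fun p q => deriv (fun s => u s q) p

/-- Partial derivative in the second variable q of a function of (p,q). -/
noncomputable def dq (u : ℝ → ℝ → ℝ) : ℝ → ℝ → ℝ :=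
  fun p q => deriv (fun s => u p s) q

lemma deriv_p_aux (a b c : ℝ) (s : ℝ) :
    HasDerivAt (fun s => a * Real.exp (b * s + c)) (a * b * Real.exp (b * s + c)) s := by
  have h1 : HasDerivAt (fun s : ℝ => b * s + c) b s := by
    simpa using ((hasDerivAt_id s).const_mul b).add_const c
  have := (h1.exp).const_mul a
  convert this using 1
  all_goals first | rfl | ring

/-- The baroclinic Rossby-wave family: v̂ = (c₂/H)exp(lam1p + ∫(2H'F+βlam1H)/((2F−lam1²H)H)dq)
solves (Hv̂_pp)_q − 2Fv̂_q + βv̂_p = 0. -/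
theorem baroclinic_rossby (β F lam1 c₂ : ℝ)
    (H J : ℝ → ℝ) (hH : ContDiff ℝ (⊤ : ℕ∞) H) (hH0 : ∀ q, H q ≠ 0)
    (hden : ∀ q : ℝ, 2 * F - lam1 ^ 2 * H q ≠ 0)
    (hJ : ∀ q, HasDerivAt J
      ((2 * deriv H q * F + β * lam1 * H q) / ((2 * F - lam1 ^ 2 * H q) * H q)) q) :
    ∀ p q : ℝ,
      dq (fun p q => H q *
          dp (dp (fun p q => (c₂ / H q) * Real.exp (lam1 * p + J q))) p q) p q
        - 2 * F * dq (fun p q => (c₂ / H q) * Real.exp (lam1 * p + J q)) p q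
        + β * dp (fun p q => (c₂ / H q) * Real.exp (lam1 * p + J q)) p q = 0 := by
  intro p q
  -- first derivative in p
  have hdp : ∀ a b : ℝ, dp (fun p q => (c₂ / H q) * Real.exp (lam1 * p + J q)) a b
      = (c₂ / H b) * lam1 * Real.exp (lam1 * a + J b) := by
    intro a b
    have := (deriv_p_aux (c₂ / H b) lam1 (J b) a).deriv
    simp only [dp]
    rw [this]
  -- second derivative in p
  have hdpp : ∀ a b : ℝ, dp (dp (fun p q => (c₂ / H q) * Real.exp (lam1 * p + J q))) a b
      = (c₂ / H b) * lam1 ^ 2 * Real.exp (lam1 * a + J b) := by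
    intro a b
    have heq : (fun s => dp (fun p q => (c₂ / H q) * Real.exp (lam1 * p + J q)) s b)
        = fun s => (c₂ / H b * lam1) * Real.exp (lam1 * s + J b) := by
      funext s; rw [hdp]
    show deriv (fun s => dp (fun p q => (c₂ / H q) * Real.exp (lam1 * p + J q)) s b) a = _
    rw [heq, (deriv_p_aux (c₂ / H b * lam1) lam1 (J b) a).deriv]
    ring
  -- the inner q-function simplifies since H b * (c₂/H b) = c₂
  have hinner : (fun s => H s *
      dp (dp (fun p q => (c₂ / H q) * Real.exp (lam1 * p + J q))) p s)
      = fun s => (c₂ * lam1 ^ 2) * Real.exp (lam1 * p + J s) := by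
    funext s
    rw [hdpp]
    have hs := hH0 s
    field_simp
  set J' := (2 * deriv H q * F + β * lam1 * H q) / ((2 * F - lam1 ^ 2 * H q) * H q) with hJ'
  -- dq of the inner function
  have h1 : dq (fun p q => H q *
      dp (dp (fun p q => (c₂ / H q) * Real.exp (lam1 * p + J q))) p q) p q
      = (c₂ * lam1 ^ 2) * Real.exp (lam1 * p + J q) * J' := by
    simp only [dq]
    rw [hinner]
    have hq1 : HasDerivAt (fun s : ℝ => lam1 * p + J s) J' q := by
      simpa using ((hJ q).const_add (lam1 * p))
    have := (hq1.exp).const_mul (c₂ * lam1 ^ 2)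
    rw [this.deriv]; ring
  -- dq of v̂
  have h2 : dq (fun p q => (c₂ / H q) * Real.exp (lam1 * p + J q)) p q
      = Real.exp (lam1 * p + J q) * (c₂ / H q * J' - c₂ * deriv H q / (H q) ^ 2) := by
    simp only [dq]
    have hHq : HasDerivAt H (deriv H q) q :=
      (hH.differentiable (by simp)).differentiableAt.hasDerivAt
    have hdiv : HasDerivAt (fun s => c₂ / H s) (-(c₂ * deriv H q) / (H q) ^ 2) q := by
      simpa [Pi.div_def] using (hasDerivAt_const q c₂).div hHq (hH0 q)
    have hq1 : HasDerivAt (fun s : ℝ => lam1 * p + J s) J' q := by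
      simpa using ((hJ q).const_add (lam1 * p))
    have hexp := hq1.exp
    have : HasDerivAt (fun s => c₂ / H s * Real.exp (lam1 * p + J s)) _ q := hdiv.mul hexp
    rw [this.deriv]; ring
  rw [h1, h2, hdp]
  rw [hJ']
  have hH0q := hH0 q
  have hdenq := hden q
  field_simp
  ring
end

section
/- For a smooth positive function A of q̄ and constants λ ≠ 0 (with λ² − 2FA(q̄) ≠ 0 for all q̄), β, F, c, the function v̄(p̄,q̄) = c·exp(λp̄ − ∫ (βλ − 2FA'(q̄))/(λ² − 2FA(q̄)) dq̄) satisfies the third-order PDE v̄_{p̄p̄q̄} − 2F(A v̄)_{q̄} + β v̄_{p̄} = 0. -/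
open Real

/-- v̄ = c·exp(lamp̄ − ∫(βlam−2FA')/(lam²−2FA)dq̄) solves v̄_ppq − 2F(Av̄)_q + βv̄_p = 0. -/
theorem general_A_reduction_solution (β F lam c : ℝ) (hlam : lam ≠ 0)
    (A K : ℝ → ℝ) (hA : ContDiff ℝ (⊤ : ℕ∞) A) (hApos : ∀ q, 0 < A q)
    (hden : ∀ q : ℝ, lam ^ 2 - 2 * F * A q ≠ 0)
    (hK : ∀ q, HasDerivAt K ((β * lam - 2 * F * deriv A q) / (lam ^ 2 - 2 * F * A q)) q) :
    ∀ p q : ℝ,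
      dq (dp (dp (fun p q => c * Real.exp (lam * p - K q)))) p q
        - 2 * F * dq (fun p q => A q * (c * Real.exp (lam * p - K q))) p q
        + β * dp (fun p q => c * Real.exp (lam * p - K q)) p q = 0 := by
  intro p q
  have hv : ∀ p q : ℝ, HasDerivAt (fun s => c * Real.exp (lam * s - K q))
      (lam * (c * Real.exp (lam * p - K q))) p := by
    intro p q
    have h1 : HasDerivAt (fun s : ℝ => lam * s - K q) lam p := by
      simpa using ((hasDerivAt_id p).const_mul lam).sub_const (K q)
    have := h1.exp.const_mul c
    exact this.congr_deriv (by ring)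
  have hdp : dp (fun p q => c * Real.exp (lam * p - K q))
      = fun p q => lam * (c * Real.exp (lam * p - K q)) := by
    funext p q
    exact (hv p q).deriv
  have hdpp : dp (dp (fun p q => c * Real.exp (lam * p - K q)))
      = fun p q => lam * (lam * (c * Real.exp (lam * p - K q))) := by
    rw [hdp]
    funext p q
    exact ((hv p q).const_mul lam).deriv
  -- q-derivative of exp(lam*p - K s)
  have hq : ∀ q : ℝ, HasDerivAt (fun s => c * Real.exp (lam * p - K s))
      (c * Real.exp (lam * p - K q) *
        (-((β * lam - 2 * F * deriv A q) / (lam ^ 2 - 2 * F * A q)))) q := by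
    intro q
    have h1 : HasDerivAt (fun s : ℝ => lam * p - K s)
        (-((β * lam - 2 * F * deriv A q) / (lam ^ 2 - 2 * F * A q))) q :=
      (hK q).const_sub (lam * p)
    have := h1.exp.const_mul c
    exact this.congr_deriv (by ring)
  set k := (β * lam - 2 * F * deriv A q) / (lam ^ 2 - 2 * F * A q) with hk
  have h1 : dq (dp (dp (fun p q => c * Real.exp (lam * p - K q)))) p q
      = lam * lam * (c * Real.exp (lam * p - K q) * (-k)) := by
    rw [hdpp]
    simp only [dq]
    have : HasDerivAt (fun s => lam * (lam * (c * Real.exp (lam * p - K s))))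
        (lam * (lam * (c * Real.exp (lam * p - K q) * (-k)))) q :=
      ((hq q).const_mul lam).const_mul lam
    rw [this.deriv]; ring
  have hAq : HasDerivAt A (deriv A q) q :=
    (hA.differentiable (by simp) q).hasDerivAt
  have h2 : dq (fun p q => A q * (c * Real.exp (lam * p - K q))) p q
      = deriv A q * (c * Real.exp (lam * p - K q))
        + A q * (c * Real.exp (lam * p - K q) * (-k)) := by
    simp only [dq]
    exact (hAq.mul (hq q)).deriv
  have h3 : dp (fun p q => c * Real.exp (lam * p - K q)) p q
      = lam * (c * Real.exp (lam * p - K q)) := by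
    simp only [dp]
    exact (hv p q).deriv
  rw [h1, h2, h3]
  have hkq : k * (lam ^ 2 - 2 * F * A q) = β * lam - 2 * F * deriv A q := by
    rw [hk, div_mul_cancel₀ _ (hden q)]
  linear_combination (-(c * Real.exp (lam * p - K q))) * hkq
end

section
/- The ansatz v̄(p̄,q̄) = ṽ(r) q̄^λ with r = p̄·q̄ reduces the PDE v̄_{p̄p̄q̄} − 2F(κq̄² v̄)_{q̄} + β v̄_{p̄} = 0 (i.e. the case A = κq̄²) to the ODE r ṽ''' + (λ+2)ṽ'' + (β − 2κF r)ṽ' − 2κF(λ+2)ṽ = 0: if ṽ satisfies the ODE on an interval, then v̄ satisfies the PDE on the corresponding domain with q̄ > 0. -/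
open Real

private lemma dp_scaled (g : ℝ → ℝ) (hg : Differentiable ℝ g) (c : ℝ → ℝ) :
    dp (fun p q => g (p * q) * c q) = fun p q => deriv g (p * q) * q * c q := by
  funext p q
  have h1 : HasDerivAt (fun s : ℝ => g (s * q)) (deriv g (p * q) * q) p :=
    ((hg (p * q)).hasDerivAt).comp p (hasDerivAt_mul_const q)
  simpa [dp] using (h1.mul_const (c q)).deriv

/-- The ansatz v̄ = ṽ(p̄q̄)·q̄^lam reduces the PDE with A = κq̄² to the ODE
r ṽ''' + (lam+2)ṽ'' + (β − 2κFr)ṽ' − 2κF(lam+2)ṽ = 0. -/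
theorem reduction_selfsimilar (κ F β lam a b : ℝ) (hκ : κ ≠ 0)
    (vt : ℝ → ℝ) (hvt : ContDiff ℝ (⊤ : ℕ∞) vt)
    (hode : ∀ r ∈ Set.Ioo a b,
      r * iteratedDeriv 3 vt r + (lam + 2) * iteratedDeriv 2 vt r
        + (β - 2 * κ * F * r) * deriv vt r - 2 * κ * F * (lam + 2) * vt r = 0) :
    ∀ p q : ℝ, 0 < q → p * q ∈ Set.Ioo a b →
      dq (dp (dp (fun p q => vt (p * q) * q ^ lam))) p q
        - 2 * F * dq (fun p q => κ * q ^ 2 * (vt (p * q) * q ^ lam)) p q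
        + β * dp (fun p q => vt (p * q) * q ^ lam) p q = 0 := by
  intro p q hq hin
  have hvt' : ContDiff ℝ (⊤ : ℕ∞) vt := hvt.of_le (by simp)
  have hd0 : Differentiable ℝ vt := hvt'.differentiable (by simp)
  have hsm1 : ContDiff ℝ (⊤ : ℕ∞) (deriv vt) := by
    simpa using hvt'.iterate_deriv 1
  have hsm2 : ContDiff ℝ (⊤ : ℕ∞) (deriv (deriv vt)) := by
    simpa [Function.iterate_succ_apply'] using hvt'.iterate_deriv 2
  have hd1 : Differentiable ℝ (deriv vt) := hsm1.differentiable (by simp)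
  have hd2 : Differentiable ℝ (deriv (deriv vt)) := hsm2.differentiable (by simp)
  -- first p-derivative
  have e1 : dp (fun p q => vt (p * q) * q ^ lam)
      = fun p q => deriv vt (p * q) * q * q ^ lam := dp_scaled vt hd0 _
  -- second p-derivative
  have e2 : dp (fun p q => deriv vt (p * q) * q * q ^ lam)
      = fun p q => deriv (deriv vt) (p * q) * q * (q * q ^ lam) := by
    have h : (fun p q : ℝ => deriv vt (p * q) * q * q ^ lam)
        = fun p q : ℝ => deriv vt (p * q) * (q * q ^ lam) := by
      funext p q; ring
    rw [h]
    exact dp_scaled (deriv vt) hd1 (fun q => q * q ^ lam)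
  simp only [e1, e2]
  -- basic one-variable derivatives at q
  have hrpow : HasDerivAt (fun s : ℝ => s ^ lam) (lam * q ^ (lam - 1)) q :=
    Real.hasDerivAt_rpow_const (Or.inl hq.ne')
  have hlin : ∀ g : ℝ → ℝ, Differentiable ℝ g →
      HasDerivAt (fun s : ℝ => g (p * s)) (deriv g (p * q) * p) q := by
    intro g hg
    have hi : HasDerivAt (fun s : ℝ => p * s) p q := by
      simpa using (hasDerivAt_id q).const_mul p
    exact HasDerivAt.comp q ((hg (p * q)).hasDerivAt) hi
  -- dq of dp dp v
  have hA : HasDerivAt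
      (fun s : ℝ => deriv (deriv vt) (p * s) * s * (s * s ^ lam))
      ((deriv (deriv (deriv vt)) (p * q) * p * q + deriv (deriv vt) (p * q) * 1)
        * (q * q ^ lam)
        + deriv (deriv vt) (p * q) * q * (1 * q ^ lam + q * (lam * q ^ (lam - 1)))) q := by
    exact ((hlin _ hd2).mul (hasDerivAt_id q)).mul ((hasDerivAt_id q).mul hrpow)
  have eA : dq (fun p q => deriv (deriv vt) (p * q) * q * (q * q ^ lam)) p q
      = (deriv (deriv (deriv vt)) (p * q) * p * q + deriv (deriv vt) (p * q) * 1)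
        * (q * q ^ lam)
        + deriv (deriv vt) (p * q) * q * (1 * q ^ lam + q * (lam * q ^ (lam - 1))) := by
    simpa [dq] using hA.deriv
  -- dq of the flux term
  have hB : HasDerivAt
      (fun s : ℝ => κ * s ^ 2 * (vt (p * s) * s ^ lam))
      (κ * (2 * q ^ 1) * (vt (p * q) * q ^ lam)
        + κ * q ^ 2 * (deriv vt (p * q) * p * q ^ lam + vt (p * q) * (lam * q ^ (lam - 1)))) q := by
    have h1 : HasDerivAt (fun s : ℝ => κ * s ^ 2) (κ * (↑2 * q ^ 1)) q :=
      (hasDerivAt_pow 2 q).const_mul κ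
    have h2 : HasDerivAt (fun s : ℝ => vt (p * s) * s ^ lam)
        (deriv vt (p * q) * p * q ^ lam + vt (p * q) * (lam * q ^ (lam - 1))) q :=
      (hlin _ hd0).mul hrpow
    convert h1.mul h2 using 1 <;> rfl
  have eB : dq (fun p q => κ * q ^ 2 * (vt (p * q) * q ^ lam)) p q
      = κ * (2 * q ^ 1) * (vt (p * q) * q ^ lam)
        + κ * q ^ 2 * (deriv vt (p * q) * p * q ^ lam + vt (p * q) * (lam * q ^ (lam - 1))) := by
    simpa [dq] using hB.deriv
  rw [eA, eB]
  -- the ODE at r = p*q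
  have H := hode (p * q) hin
  have hi3 : iteratedDeriv 3 vt = deriv (deriv (deriv vt)) := by
    simp [iteratedDeriv_eq_iterate, Function.iterate_succ_apply']
  have hi2 : iteratedDeriv 2 vt = deriv (deriv vt) := by
    simp [iteratedDeriv_eq_iterate, Function.iterate_succ_apply']
  rw [hi3, hi2] at H
  have hpow : q ^ lam = q ^ (lam - 1) * q := by
    rw [← Real.rpow_add_one hq.ne']; ring_nf
  rw [hpow]
  linear_combination (q ^ (lam - 1) * q ^ 2) * H
end

section
/- If φ¹(q) = c₁e^{−ζ(q)} where ζ is an antiderivative of (2A'(q) − λ)/(2A(q) − λ²), and 2A(q) − λ² ≠ 0 for all q, then the function v(p,q) = φ¹(q)e^{λp} satisfies v_{ppq} − 2(Av)_q + v_p = 0. -/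
open Real

private lemma exp_mul_deriv (lam C p : ℝ) :
    HasDerivAt (fun s : ℝ => C * Real.exp (lam * s)) (C * (lam * Real.exp (lam * p))) p := by
  have h : HasDerivAt (fun s : ℝ => Real.exp (lam * s)) (Real.exp (lam * p) * lam) p := by
    have := ((hasDerivAt_id p).const_mul lam).exp
    simpa using this
  have := h.const_mul C
  simpa [mul_comm, mul_left_comm] using this

/-- The base case of the extended Lie reduction: v = c₁e^{−ζ(q)}e^{λp} solves
v_ppq − 2(Av)_q + v_p = 0 when ζ' = (2A' − λ)/(2A − λ²). -/
theorem extended_reduction_base (lam c₁ : ℝ) (A ζ : ℝ → ℝ)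
    (hA : ContDiff ℝ (⊤ : ℕ∞) A) (hden : ∀ q : ℝ, 2 * A q - lam ^ 2 ≠ 0)
    (hζ : ∀ q, HasDerivAt ζ ((2 * deriv A q - lam) / (2 * A q - lam ^ 2)) q) :
    ∀ p q : ℝ,
      dq (dp (dp (fun p q => c₁ * Real.exp (-ζ q) * Real.exp (lam * p)))) p q
        - 2 * dq (fun p q => A q * (c₁ * Real.exp (-ζ q) * Real.exp (lam * p))) p q
        + dp (fun p q => c₁ * Real.exp (-ζ q) * Real.exp (lam * p)) p q = 0 := by
  intro p q
  set ζ' : ℝ → ℝ := fun q => (2 * deriv A q - lam) / (2 * A q - lam ^ 2) with hζ'def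
  -- dp of v
  have hdp : dp (fun p q => c₁ * Real.exp (-ζ q) * Real.exp (lam * p))
      = fun p q => (c₁ * Real.exp (-ζ q)) * (lam * Real.exp (lam * p)) := by
    funext p q
    exact (exp_mul_deriv lam (c₁ * Real.exp (-ζ q)) p).deriv
  have hdpdp : dp (dp (fun p q => c₁ * Real.exp (-ζ q) * Real.exp (lam * p)))
      = fun p q => (c₁ * Real.exp (-ζ q) * lam) * (lam * Real.exp (lam * p)) := by
    rw [hdp]
    funext p q
    simp only [dp]
    have h2 : (fun s : ℝ => c₁ * Real.exp (-ζ q) * (lam * Real.exp (lam * s)))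
        = fun s : ℝ => c₁ * Real.exp (-ζ q) * lam * Real.exp (lam * s) := by
      funext s; ring
    rw [h2, (exp_mul_deriv lam (c₁ * Real.exp (-ζ q) * lam) p).deriv]
  -- derivative in q of exp(-ζ q)
  have hexpζ : ∀ q : ℝ, HasDerivAt (fun s => Real.exp (-ζ s)) (-ζ' q * Real.exp (-ζ q)) q := by
    intro q
    have := ((hζ q).neg).exp
    convert this using 1
    · rfl
    rw [hζ'def, Pi.neg_apply]
    ring
  have hdqterm1 : dq (dp (dp (fun p q => c₁ * Real.exp (-ζ q) * Real.exp (lam * p)))) p q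
      = (c₁ * (-ζ' q * Real.exp (-ζ q)) * lam) * (lam * Real.exp (lam * p)) := by
    rw [hdpdp]
    have h : HasDerivAt (fun s => c₁ * Real.exp (-ζ s) * lam * (lam * Real.exp (lam * p)))
        (c₁ * (-ζ' q * Real.exp (-ζ q)) * lam * (lam * Real.exp (lam * p))) q := by
      have := ((hexpζ q).const_mul c₁).mul_const (lam * (lam * Real.exp (lam * p)))
      simpa [mul_comm, mul_left_comm, mul_assoc] using this
    exact h.deriv
  have hAdiff : ∀ q, HasDerivAt A (deriv A q) q :=
    fun q => ((hA.differentiable (by simp)) q).hasDerivAt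
  have hdqterm2 : dq (fun p q => A q * (c₁ * Real.exp (-ζ q) * Real.exp (lam * p))) p q
      = (deriv A q * (c₁ * Real.exp (-ζ q)) + A q * (c₁ * (-ζ' q * Real.exp (-ζ q))))
          * Real.exp (lam * p) := by
    have h : HasDerivAt (fun s => A s * (c₁ * Real.exp (-ζ s) * Real.exp (lam * p)))
        ((deriv A q * (c₁ * Real.exp (-ζ q)) + A q * (c₁ * (-ζ' q * Real.exp (-ζ q))))
          * Real.exp (lam * p)) q := by
      have h1 : HasDerivAt (fun s => c₁ * Real.exp (-ζ s)) (c₁ * (-ζ' q * Real.exp (-ζ q))) q :=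
        (hexpζ q).const_mul c₁
      have h2 := ((hAdiff q).mul h1).mul_const (Real.exp (lam * p))
      have heq : (fun s => A s * (c₁ * Real.exp (-ζ s) * Real.exp (lam * p)))
          = fun s => A s * (c₁ * Real.exp (-ζ s)) * Real.exp (lam * p) := by
        funext s; ring
      rw [heq]
      exact h2
    exact h.deriv
  have hdpv : dp (fun p q => c₁ * Real.exp (-ζ q) * Real.exp (lam * p)) p q
      = (c₁ * Real.exp (-ζ q)) * (lam * Real.exp (lam * p)) := by rw [hdp]
  rw [hdqterm1, hdqterm2, hdpv]
  have hz : ζ' q * (2 * A q - lam ^ 2) = 2 * deriv A q - lam := by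
    rw [hζ'def]
    field_simp [hden q]
  linear_combination (c₁ * Real.exp (-ζ q) * Real.exp (lam * p)) * hz
end
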